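/- arXiv:2406.19040 — 4 statements merged into one kernel-verified Lean document; each statement's English description precedes it below -/
import Mathlib

section
/- Let Z ~ N(μ_Z, σ_Z² I_d) with ‖μ_Z‖₂ ≤ 2 and σ_Z ∈ (0,1], and let u ∈ ℝ^d with ‖u‖₂ ≤ 1. Then E[|trunc₃(⟨Z,u⟩) − ⟨Z,u⟩|] ≤ 4·exp(−0.2/σ_Z²). -/
/-!
`gaussianPi μ σ` is the image of the standard Gaussian under `x ↦ μ + σ • x`, so `X = ⟪Z, u⟫`
has law `N(m, v)` with `m = ⟪μ, u⟫`, `|m| ≤ 2`, and `v = σ²‖u‖² ≤ σ²`. The truncation error is at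
most `|X| · 1[|X| > 3]`, and by Cauchy–Schwarz its expectation is at most
`√(E X²) · √P(|X| > 3)`. Here `E X² = m² + v ≤ 5`, and `|X| > 3` forces `|X - m| ≥ 1`, which has
probability at most `2 exp(-1/(2σ²))` by the sub-Gaussian tail bound. Finally
`√10 · exp(-1/(4σ²)) ≤ 4 exp(-0.2/σ²)`.
-/

open MeasureTheory Real RealInnerProductSpace

noncomputable def gaussianPi {d : ℕ} (μZ : EuclideanSpace ℝ (Fin d)) (σ : ℝ) :
    Measure (EuclideanSpace ℝ (Fin d)) :=
  volume.withDensity (fun x =>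
    ENNReal.ofReal ((2 * π * σ ^ 2) ^ (-(d : ℝ) / 2) * Real.exp (-‖x - μZ‖ ^ 2 / (2 * σ ^ 2))))

noncomputable def trunc (c : ℝ) (b : ℝ) : ℝ := b * min 1 (c / |b|)

open ProbabilityTheory WithLp
open scoped NNReal ENNReal

lemma MeasureTheory.MeasurePreserving.map_withDensity_comp {α β : Type*} [MeasurableSpace α]
    [MeasurableSpace β] {μ : Measure α} {ν : Measure β} {e : α ≃ᵐ β}
    (he : MeasurePreserving e μ ν) (f : β → ℝ≥0∞) :
    (μ.withDensity (f ∘ e)).map e = ν.withDensity f := by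
  ext s hs
  rw [Measure.map_apply e.measurable hs, withDensity_apply _ (e.measurable hs),
    withDensity_apply _ hs]
  exact he.setLIntegral_comp_preimage_emb e.measurableEmbedding f s

lemma pi_gaussianReal_eq_withDensity {ι : Type*} [Fintype ι] (m : ℝ) {v : ℝ≥0} (hv : v ≠ 0) :
    Measure.pi (fun _ : ι ↦ gaussianReal m v) =
      volume.withDensity (fun x ↦ ENNReal.ofReal (∏ i, gaussianPDFReal m v (x i))) := by
  refine Measure.pi_eq fun s hs ↦ ?_
  have hint : Integrable (fun x : ι → ℝ ↦ ∏ i, gaussianPDFReal m v (x i))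
      (Measure.pi fun i ↦ volume.restrict (s i)) :=
    .fintype_prod fun _ ↦ (integrable_gaussianPDFReal m v).restrict
  rw [withDensity_apply _ (.univ_pi hs), volume_pi, Measure.restrict_pi_pi,
    ← ofReal_integral_eq_lintegral_ofReal hint
      (ae_of_all _ fun x ↦ Finset.prod_nonneg fun i _ ↦ gaussianPDFReal_nonneg _ _ _),
    integral_fintype_prod_eq_prod, ENNReal.ofReal_prod_of_nonneg
      fun i _ ↦ setIntegral_nonneg_of_ae (ae_of_all _ fun x ↦ gaussianPDFReal_nonneg _ _ _)]
  simp_rw [gaussianReal_apply_eq_integral _ hv]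

lemma prod_gaussianPDFReal_zero_eq {ι : Type*} [Fintype ι] (σ : ℝ) (y : ι → ℝ) :
    ∏ i, gaussianPDFReal 0 (σ ^ 2).toNNReal (y i) =
      (2 * π * σ ^ 2) ^ (-(Fintype.card ι : ℝ) / 2) *
        Real.exp (-‖toLp 2 y‖ ^ 2 / (2 * σ ^ 2)) := by
  have hsqrt : (√(2 * π * σ ^ 2))⁻¹ ^ Fintype.card ι =
      (2 * π * σ ^ 2) ^ (-(Fintype.card ι : ℝ) / 2) := by
    rw [Real.sqrt_eq_rpow, ← Real.rpow_neg (by positivity), ← Real.rpow_natCast,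
      ← Real.rpow_mul (by positivity)]
    ring_nf
  simp only [gaussianPDFReal, Real.coe_toNNReal _ (sq_nonneg σ), sub_zero,
    Finset.prod_mul_distrib, Finset.prod_const, Finset.card_univ, hsqrt, ← Real.exp_sum,
    EuclideanSpace.real_norm_sq_eq, Finset.sum_div, Finset.sum_neg_distrib, neg_div]

lemma pi_gaussianReal_sq_eq_map_const_mul {ι : Type*} [Fintype ι] (σ : ℝ) :
    Measure.pi (fun _ : ι ↦ gaussianReal 0 (σ ^ 2).toNNReal) =
      (Measure.pi fun _ : ι ↦ gaussianReal 0 1).map (fun y i ↦ σ * y i) := by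
  rw [Measure.pi_map_pi fun _ ↦ (measurable_const_mul σ).aemeasurable]
  simp_rw [gaussianReal_map_const_mul, mul_zero, mul_one, Real.toNNReal_of_nonneg (sq_nonneg σ)]

lemma stdGaussian_map_strongDual {E : Type*} [NormedAddCommGroup E] [InnerProductSpace ℝ E]
    [FiniteDimensional ℝ E] [MeasurableSpace E] [BorelSpace E] (L : StrongDual ℝ E) :
    (stdGaussian E).map L = gaussianReal 0 (‖L‖ ^ 2).toNNReal := by
  rw [IsGaussian.map_eq_gaussianReal, integral_strongDual_stdGaussian, variance_dual_stdGaussian]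

section gaussianPi

variable {d : ℕ} (μZ : EuclideanSpace ℝ (Fin d)) {σ : ℝ}

lemma gaussianPi_eq_map_pi (hσ : σ ≠ 0) :
    gaussianPi μZ σ =
      (Measure.pi fun _ ↦ gaussianReal 0 (σ ^ 2).toNNReal).map (fun y ↦ μZ + toLp 2 y) := by
  let e : (Fin d → ℝ) ≃ᵐ EuclideanSpace ℝ (Fin d) :=
    (MeasurableEquiv.toLp 2 _).trans (MeasurableEquiv.addLeft μZ)
  have he : MeasurePreserving e volume volume :=
    (measurePreserving_add_left volume μZ).comp (PiLp.volume_preserving_toLp (Fin d))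
  rw [pi_gaussianReal_eq_withDensity 0 (by simpa [← NNReal.coe_inj] using hσ), gaussianPi,
    ← he.map_withDensity_comp]
  congr 2 with y
  simp [e, prod_gaussianPDFReal_zero_eq]

lemma gaussianPi_eq_map_stdGaussian (hσ : σ ≠ 0) :
    gaussianPi μZ σ = (stdGaussian (EuclideanSpace ℝ (Fin d))).map (fun x ↦ μZ + σ • x) := by
  rw [gaussianPi_eq_map_pi μZ hσ, pi_gaussianReal_sq_eq_map_const_mul, ← map_pi_eq_stdGaussian,
    Measure.map_map (by fun_prop) (by fun_prop), Measure.map_map (by fun_prop) (by fun_prop)]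
  rfl

lemma gaussianPi_map_inner (hσ : σ ≠ 0) (u : EuclideanSpace ℝ (Fin d)) :
    (gaussianPi μZ σ).map (fun x ↦ ⟪x, u⟫) = gaussianReal ⟪μZ, u⟫ (σ ^ 2 * ‖u‖ ^ 2).toNNReal := by
  have hcomp : (fun x ↦ ⟪x, u⟫) ∘ (fun x ↦ μZ + σ • x) =
      (⟪μZ, u⟫ + ·) ∘ (σ * ·) ∘ innerSL ℝ u := by
    ext x
    simp only [Function.comp_apply, innerSL_apply_apply, inner_add_left, real_inner_smul_left,
      real_inner_comm u x]
  rw [gaussianPi_eq_map_stdGaussian μZ hσ, Measure.map_map (by fun_prop) (by fun_prop), hcomp,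
    ← Measure.map_map (by fun_prop) (by fun_prop), ← Measure.map_map (by fun_prop) (by fun_prop),
    stdGaussian_map_strongDual, gaussianReal_map_const_mul, gaussianReal_map_const_add]
  congr 1
  · simp
  · ext
    simp [innerSL_apply_norm, Real.coe_toNNReal _ (by positivity : 0 ≤ σ ^ 2 * ‖u‖ ^ 2)]

end gaussianPi

lemma hasSubgaussianMGF_id_gaussianReal {v c : ℝ≥0} (hvc : v ≤ c) :
    HasSubgaussianMGF id c (gaussianReal 0 v) where
  integrable_exp_mul t := integrable_exp_mul_gaussianReal t
  mgf_le t := by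
    simp only [mgf_id_gaussianReal, zero_mul, zero_add]
    gcongr

lemma hasSubgaussianMGF_sub_gaussianReal (m : ℝ) {v c : ℝ≥0} (hvc : v ≤ c) :
    HasSubgaussianMGF (fun x ↦ x - m) c (gaussianReal m v) := by
  rw [← HasSubgaussianMGF.id_map_iff (by fun_prop), gaussianReal_map_sub_const, sub_self]
  exact hasSubgaussianMGF_id_gaussianReal hvc

lemma gaussianReal_real_abs_sub_ge_le (m : ℝ) {v c : ℝ≥0} (hvc : v ≤ c) {ε : ℝ} (hε : 0 ≤ ε) :
    (gaussianReal m v).real {x | ε ≤ |x - m|} ≤ 2 * exp (-ε ^ 2 / (2 * c)) := by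
  have h := hasSubgaussianMGF_sub_gaussianReal m hvc
  have hsplit : {x | ε ≤ |x - m|} = {x | ε ≤ x - m} ∪ {x | ε ≤ (-fun x ↦ x - m) x} := by
    ext x
    simp [le_abs]
  rw [hsplit]
  linarith [measureReal_union_le (μ := gaussianReal m v) {x | ε ≤ x - m}
    {x | ε ≤ (-fun x ↦ x - m) x}, h.measure_ge_le hε, h.neg.measure_ge_le hε]

lemma integral_sq_gaussianReal (m : ℝ) (v : ℝ≥0) :
    ∫ x, x ^ 2 ∂gaussianReal m v = m ^ 2 + v := by
  have h := variance_eq_sub (memLp_id_gaussianReal (μ := m) (v := v) 2)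
  simp only [Pi.pow_apply, id] at h
  rw [variance_id_gaussianReal, integral_id_gaussianReal] at h
  linarith

lemma setIntegral_abs_le_sqrt_integral_sq_mul_sqrt_measureReal {α : Type*} [MeasurableSpace α]
    {μ : Measure α} {f : α → ℝ} (hf : MemLp f 2 μ) {s : Set α} (hμs : μ s ≠ ∞) :
    ∫ x in s, |f x| ∂μ ≤ √(∫ x, f x ^ 2 ∂μ) * √(μ.real s) := by
  have : IsFiniteMeasure (μ.restrict s) := isFiniteMeasure_restrict.mpr hμs
  have hf' : MemLp (fun x ↦ |f x|) (ENNReal.ofReal 2) (μ.restrict s) := by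
    rw [ENNReal.ofReal_ofNat]
    exact hf.abs.restrict s
  have hcs := integral_mul_le_Lp_mul_Lq_of_nonneg Real.HolderConjugate.two_two
    (g := fun _ ↦ (1 : ℝ)) (ae_of_all _ fun x ↦ abs_nonneg (f x))
    (ae_of_all _ fun _ ↦ zero_le_one) hf' (memLp_const (1 : ℝ))
  simp only [mul_one, integral_const, smul_eq_mul, measureReal_restrict_apply_univ,
    Real.rpow_two, sq_abs, one_pow] at hcs
  rw [Real.sqrt_eq_rpow, Real.sqrt_eq_rpow]
  refine hcs.trans ?_
  gcongr
  exacts [ae_of_all _ fun x ↦ sq_nonneg (f x), hf.integrable_sq, Measure.restrict_le_self]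

lemma measurable_trunc (c : ℝ) : Measurable (trunc c) := by
  unfold trunc
  fun_prop

lemma abs_trunc_sub_self_le {c : ℝ} (hc : 0 ≤ c) (b : ℝ) :
    |trunc c b - b| ≤ {x | c < |x|}.indicator (fun x ↦ |x|) b := by
  have hdiff : trunc c b - b = b * (min 1 (c / |b|) - 1) := by rw [trunc]; ring
  by_cases hb : c < |b|
  · rw [Set.indicator_of_mem (show b ∈ {x | c < |x|} from hb), hdiff, abs_mul]
    have : |min 1 (c / |b|) - 1| ≤ 1 := by
      rw [abs_le]
      constructor <;>
        linarith [min_le_left 1 (c / |b|), le_min zero_le_one (by positivity : 0 ≤ c / |b|)]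
    nlinarith [abs_nonneg b]
  · rw [Set.indicator_of_notMem (show b ∉ {x | c < |x|} from hb)]
    rcases eq_or_ne b 0 with rfl | hb0
    · simp [trunc]
    · rw [not_lt] at hb
      rw [hdiff, min_eq_left ((one_le_div (abs_pos.mpr hb0)).mpr hb)]
      simp

lemma integral_abs_trunc_sub_gaussianReal_le {m σ : ℝ} {v : ℝ≥0} (hm : |m| ≤ 2) (hσ0 : 0 < σ)
    (hσ1 : σ ≤ 1) (hv : (v : ℝ) ≤ σ ^ 2) :
    ∫ x, |trunc 3 x - x| ∂gaussianReal m v ≤ 4 * exp (-0.2 / σ ^ 2) := by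
  have htail : {x : ℝ | 3 < |x|} ⊆ {x | 1 ≤ |x - m|} := by
    intro x (hx : 3 < |x|)
    show 1 ≤ |x - m|
    linarith [abs_sub_abs_le_abs_sub x m]
  have hmeas : MeasurableSet {x : ℝ | 3 < |x|} := measurableSet_lt measurable_const measurable_abs
  calc ∫ x, |trunc 3 x - x| ∂gaussianReal m v
      ≤ ∫ x in {x | 3 < |x|}, |x| ∂gaussianReal m v := by
        rw [← integral_indicator hmeas]
        refine integral_mono_of_nonneg (ae_of_all _ fun _ ↦ abs_nonneg _) ?_
          (ae_of_all _ (abs_trunc_sub_self_le zero_le_three))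
        exact ((memLp_id_gaussianReal 1).integrable le_rfl).abs.indicator hmeas
    _ ≤ √(m ^ 2 + v) * √((gaussianReal m v).real {x | 3 < |x|}) := by
        rw [← integral_sq_gaussianReal]
        exact setIntegral_abs_le_sqrt_integral_sq_mul_sqrt_measureReal (memLp_id_gaussianReal 2)
          (measure_ne_top _ _)
    _ ≤ √5 * √(2 * exp (-1 ^ 2 / (2 * (σ ^ 2).toNNReal))) := by
        gcongr
        · nlinarith [sq_abs m, abs_nonneg m, pow_le_one₀ (n := 2) hσ0.le hσ1]
        · refine (measureReal_mono htail).trans (gaussianReal_real_abs_sub_ge_le m ?_ zero_le_one)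
          rw [← NNReal.coe_le_coe, Real.coe_toNNReal _ (sq_nonneg σ)]
          exact hv
    _ ≤ 4 * exp (-0.2 / σ ^ 2) := by
        have hexp : -1 / (2 * σ ^ 2) ≤ -0.2 / σ ^ 2 + -0.2 / σ ^ 2 := by
          rw [← add_div, div_le_div_iff₀ (by positivity) (by positivity)]
          nlinarith [pow_pos hσ0 2]
        rw [Real.coe_toNNReal _ (sq_nonneg σ), one_pow, ← Real.sqrt_mul (by norm_num),
          Real.sqrt_le_left (by positivity), mul_pow, sq (exp _), ← Real.exp_add]
        nlinarith [Real.exp_le_exp.mpr hexp, Real.exp_pos (-0.2 / σ ^ 2 + -0.2 / σ ^ 2)]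

theorem gaussian_trunc_error_expectation {d : ℕ} (μZ : EuclideanSpace ℝ (Fin d)) (σZ : ℝ)
    (hσ0 : 0 < σZ) (hσ1 : σZ ≤ 1) (hμ : ‖μZ‖ ≤ 2)
    (u : EuclideanSpace ℝ (Fin d)) (hu : ‖u‖ ≤ 1) :
    ∫ x, |trunc 3 ⟪x, u⟫ - ⟪x, u⟫| ∂(gaussianPi μZ σZ) ≤
      4 * Real.exp (-0.2 / σZ ^ 2) := by
  have hmean : |⟪μZ, u⟫| ≤ 2 :=
    (abs_real_inner_le_norm μZ u).trans (by nlinarith [norm_nonneg μZ, norm_nonneg u])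
  have hvar : ((σZ ^ 2 * ‖u‖ ^ 2).toNNReal : ℝ) ≤ σZ ^ 2 := by
    rw [Real.coe_toNNReal _ (by positivity)]
    nlinarith [pow_le_one₀ (n := 2) (norm_nonneg u) hu, pow_pos hσ0 2]
  rw [← integral_map (f := fun t ↦ |trunc 3 t - t|) (by fun_prop)
      ((measurable_trunc 3).sub measurable_id).abs.aestronglyMeasurable,
    gaussianPi_map_inner μZ hσ0.ne' u]
  exact integral_abs_trunc_sub_gaussianReal_le hmean hσ0 hσ1 hvar
end

section
/- Let P be a distribution over B₂^d(1) with mean μ_P, and Z ~ N(μ_Z, σ_Z² I_d) with σ_Z ∈ (0,1], ‖μ_Z‖₂ ≤ 2. Then E_Z[|⟨Z, E_{U∼P}[clip_{Z,3}(U)] − μ_P⟩|] ≤ 4·exp(−0.2/σ_Z²). -/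
open MeasureTheory Real RealInnerProductSpace

noncomputable def clip {d : ℕ} (φ : EuclideanSpace ℝ (Fin d)) (c : ℝ)
    (u : EuclideanSpace ℝ (Fin d)) : EuclideanSpace ℝ (Fin d) :=
  if ⟪φ, u⟫ ≠ 0 then (min 1 (c / |⟪φ, u⟫|)) • u else u

variable {d : ℕ}

lemma my_integrable_rexp {b : ℝ} (hb : 0 < b) (c : ℝ) (w : EuclideanSpace ℝ (Fin d)) :
    Integrable (fun v : EuclideanSpace ℝ (Fin d) => rexp (-b * ‖v‖ ^ 2 + c * ⟪w, v⟫)) := by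
  have h := (GaussianFourier.integrable_cexp_neg_mul_sq_norm_add
      (V := EuclideanSpace ℝ (Fin d)) (b := (b : ℂ)) (by simpa using hb) (c : ℂ) w).re
  refine h.congr (Filter.Eventually.of_forall fun v => ?_)
  have h1 : (-(b:ℂ) * ‖v‖ ^ 2 + (c:ℂ) * ⟪w, v⟫) = ((-b * ‖v‖ ^ 2 + c * ⟪w, v⟫ : ℝ) : ℂ) := by
    push_cast; ring
  simp only [h1, ← Complex.ofReal_exp, Complex.ofReal_re, RCLike.re_to_complex]

lemma my_integral_rexp {b : ℝ} (hb : 0 < b) (c : ℝ) (w : EuclideanSpace ℝ (Fin d)) :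
    ∫ v : EuclideanSpace ℝ (Fin d), rexp (-b * ‖v‖ ^ 2 + c * ⟪w, v⟫) =
      (π / b) ^ ((d : ℝ) / 2) * rexp (c ^ 2 * ‖w‖ ^ 2 / (4 * b)) := by
  have h := GaussianFourier.integral_cexp_neg_mul_sq_norm_add
      (V := EuclideanSpace ℝ (Fin d)) (b := (b : ℂ)) (by simpa using hb) (c : ℂ) w
  rw [finrank_euclideanSpace_fin] at h
  have h2 : ∫ v : EuclideanSpace ℝ (Fin d), Complex.exp (-(b:ℂ) * ‖v‖ ^ 2 + (c:ℂ) * ⟪w, v⟫)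
      = ((∫ v : EuclideanSpace ℝ (Fin d), rexp (-b * ‖v‖ ^ 2 + c * ⟪w, v⟫) : ℝ) : ℂ) := by
    rw [show ((∫ v : EuclideanSpace ℝ (Fin d), rexp (-b * ‖v‖ ^ 2 + c * ⟪w, v⟫) : ℝ) : ℂ)
        = ∫ v : EuclideanSpace ℝ (Fin d),
            ((rexp (-b * ‖v‖ ^ 2 + c * ⟪w, v⟫) : ℝ) : ℂ) from (integral_ofReal).symm]
    congr 1 with v
    have h1 : (-(b:ℂ) * ‖v‖ ^ 2 + (c:ℂ) * ⟪w, v⟫) = ((-b * ‖v‖ ^ 2 + c * ⟪w, v⟫ : ℝ) : ℂ) := by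
      push_cast; ring
    rw [h1, ← Complex.ofReal_exp]
  rw [h2] at h
  rw [← Complex.ofReal_inj, h]
  have hpb : (0:ℝ) ≤ π / b := by positivity
  have e1 : ((π:ℂ) / b) ^ ((d:ℂ) / 2) = ((((π / b) ^ ((d:ℝ)/2)) : ℝ) : ℂ) := by
    rw [Complex.ofReal_cpow hpb]; push_cast; ring_nf
  have e2 : ((c:ℂ)^2 * (‖w‖:ℂ)^2 / (4*(b:ℂ))) = ((c^2 * ‖w‖^2 / (4*b) : ℝ) : ℂ) := by
    push_cast; ring
  rw [e1, e2, ← Complex.ofReal_exp, ← Complex.ofReal_mul]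

set_option maxHeartbeats 1000000 in
lemma gaussianPi_mgf {d : ℕ} (μZ u : EuclideanSpace ℝ (Fin d)) {σ : ℝ} (hσ : 0 < σ) (t : ℝ) :
    ∫⁻ z, ENNReal.ofReal (rexp (t * ⟪u, z⟫)) ∂(gaussianPi μZ σ) =
      ENNReal.ofReal (rexp (t * ⟪u, μZ⟫ + t ^ 2 * σ ^ 2 * ‖u‖ ^ 2 / 2)) := by
  have hσ2 : (0:ℝ) < σ ^ 2 := by positivity
  obtain ⟨b, hbdef⟩ : ∃ b : ℝ, b = 1 / (2 * σ ^ 2) := ⟨_, rfl⟩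
  have hb : 0 < b := by rw [hbdef]; positivity
  obtain ⟨w, hwdef⟩ : ∃ w : EuclideanSpace ℝ (Fin d), w = (σ ^ 2)⁻¹ • μZ + t • u := ⟨_, rfl⟩
  obtain ⟨K, hKdef⟩ : ∃ K : ℝ,
    K = (2 * π * σ ^ 2) ^ (-(d : ℝ) / 2) * rexp (-‖μZ‖ ^ 2 / (2 * σ ^ 2)) := ⟨_, rfl⟩
  have hK : 0 ≤ K := by rw [hKdef]; positivity
  have hmeas : Measurable (fun x : EuclideanSpace ℝ (Fin d) =>
      ENNReal.ofReal ((2 * π * σ ^ 2) ^ (-(d : ℝ) / 2) * rexp (-‖x - μZ‖ ^ 2 / (2 * σ ^ 2)))) := by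
    fun_prop
  have hmeas2 : Measurable (fun z : EuclideanSpace ℝ (Fin d) =>
      ENNReal.ofReal (rexp (t * ⟪u, z⟫))) := by
    have : Continuous fun z : EuclideanSpace ℝ (Fin d) => ⟪u, z⟫ :=
      continuous_const.inner continuous_id
    exact ENNReal.measurable_ofReal.comp ((Real.continuous_exp.comp
      (continuous_const.mul this)).measurable)
  rw [gaussianPi, lintegral_withDensity_eq_lintegral_mul _ hmeas hmeas2]
  have key : ∀ z : EuclideanSpace ℝ (Fin d),
      ((fun x => ENNReal.ofReal ((2 * π * σ ^ 2) ^ (-(d : ℝ) / 2)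
          * rexp (-‖x - μZ‖ ^ 2 / (2 * σ ^ 2)))) *
        (fun z => ENNReal.ofReal (rexp (t * ⟪u, z⟫)))) z
      = ENNReal.ofReal (K * rexp (-b * ‖z‖ ^ 2 + 1 * ⟪w, z⟫)) := by
    intro z
    simp only [Pi.mul_apply]
    rw [← ENNReal.ofReal_mul (by positivity)]
    congr 1
    have hinner : ⟪w, z⟫ = (σ ^ 2)⁻¹ * ⟪μZ, z⟫ + t * ⟪u, z⟫ := by
      rw [hwdef, inner_add_left, real_inner_smul_left, real_inner_smul_left]
    have hnorm : ‖z - μZ‖ ^ 2 = ‖z‖ ^ 2 - 2 * ⟪z, μZ⟫ + ‖μZ‖ ^ 2 := by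
      rw [@norm_sub_sq_real]
    have hexp : -‖z - μZ‖ ^ 2 / (2 * σ ^ 2) + t * ⟪u, z⟫
        = -‖μZ‖ ^ 2 / (2 * σ ^ 2) + (-b * ‖z‖ ^ 2 + 1 * ⟪w, z⟫) := by
      rw [hnorm, hinner, hbdef, real_inner_comm z μZ]
      field_simp
      ring
    rw [mul_assoc, ← Real.exp_add, hexp, Real.exp_add, ← mul_assoc, hKdef]
  rw [lintegral_congr key]
  have hint := my_integrable_rexp (d := d) hb 1 w
  have h1 : ∀ z : EuclideanSpace ℝ (Fin d),
      ENNReal.ofReal (K * rexp (-b * ‖z‖ ^ 2 + 1 * ⟪w, z⟫))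
      = ENNReal.ofReal K * ENNReal.ofReal (rexp (-b * ‖z‖ ^ 2 + 1 * ⟪w, z⟫)) := fun z =>
    ENNReal.ofReal_mul hK
  simp only [h1]
  have hcont : Continuous fun z : EuclideanSpace ℝ (Fin d) => ⟪w, z⟫ :=
    continuous_const.inner continuous_id
  have hmeas3 : Measurable fun z : EuclideanSpace ℝ (Fin d) =>
      ENNReal.ofReal (rexp (-b * ‖z‖ ^ 2 + 1 * ⟪w, z⟫)) :=
    ENNReal.measurable_ofReal.comp ((Real.continuous_exp.comp
      ((continuous_const.mul (continuous_norm.pow 2)).add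
        (continuous_const.mul hcont))).measurable)
  rw [lintegral_const_mul _ hmeas3]
  rw [← ofReal_integral_eq_lintegral_ofReal hint
      (Filter.Eventually.of_forall fun z => (Real.exp_pos _).le)]
  rw [my_integral_rexp hb 1 w, ← ENNReal.ofReal_mul hK]
  congr 1
  have hπb : π / b = 2 * π * σ ^ 2 := by rw [hbdef]; field_simp
  have hw2 : ‖w‖ ^ 2 = (σ ^ 2)⁻¹ ^ 2 * ‖μZ‖ ^ 2 + 2 * ((σ ^ 2)⁻¹ * t * ⟪μZ, u⟫)
      + t ^ 2 * ‖u‖ ^ 2 := by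
    rw [hwdef, @norm_add_sq_real, real_inner_smul_left, real_inner_smul_right,
      norm_smul, norm_smul]
    simp only [Real.norm_eq_abs, abs_of_nonneg (inv_nonneg.2 hσ2.le)]
    rw [mul_pow, mul_pow, sq_abs]
    ring
  rw [hπb, hKdef]
  rw [mul_assoc, mul_comm (rexp (-‖μZ‖ ^ 2 / (2 * σ ^ 2))), ← mul_assoc, ← mul_assoc,
    ← Real.rpow_add (by positivity)]
  have hzero : -(d : ℝ) / 2 + (d : ℝ) / 2 = 0 := by ring
  rw [hzero, Real.rpow_zero, one_mul, ← Real.exp_add]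
  congr 1
  rw [hw2, hbdef, real_inner_comm μZ u]
  field_simp
  ring

lemma ptwise_bound {t : ℝ} (ht : 0 < t) (b : ℝ) :
    max 0 (|b| - 3) ≤ (rexp (-(3 * t) - 1) / t) * (rexp (t * b) + rexp (t * (-b))) := by
  have h1 : max 0 (|b| - 3) ≤ rexp (t * (|b| - 3) - 1) / t := by
    rcases le_or_gt (|b| - 3) 0 with h | h
    · refine le_trans (max_le le_rfl h) (by positivity)
    · rw [max_eq_right h.le, le_div_iff₀ ht]
      calc (|b| - 3) * t = (t * (|b| - 3) - 1) + 1 := by ring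
        _ ≤ rexp (t * (|b| - 3) - 1) := Real.add_one_le_exp _
  refine h1.trans ?_
  have hb : rexp (t * |b|) ≤ rexp (t * b) + rexp (t * (-b)) := by
    rcases abs_cases b with ⟨h, _⟩ | ⟨h, _⟩
    · rw [h]; exact le_add_of_nonneg_right (Real.exp_pos _).le
    · rw [h, mul_neg, ← mul_neg t b]; exact le_add_of_nonneg_left (Real.exp_pos _).le
  calc rexp (t * (|b| - 3) - 1) / t = (rexp (-(3 * t) - 1) / t) * rexp (t * |b|) := by
        rw [div_mul_eq_mul_div, ← Real.exp_add]; ring_nf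
    _ ≤ _ := mul_le_mul_of_nonneg_left hb (by positivity)

lemma tail_bound {d : ℕ} (μZ : EuclideanSpace ℝ (Fin d)) {σ : ℝ} (hσ0 : 0 < σ) (hσ1 : σ ≤ 1)
    (hμ : ‖μZ‖ ≤ 2) {u : EuclideanSpace ℝ (Fin d)} (hu : ‖u‖ ≤ 1) :
    ∫⁻ z, ENNReal.ofReal (max 0 (|⟪z, u⟫| - 3)) ∂(gaussianPi μZ σ) ≤
      ENNReal.ofReal (4 * rexp (-0.2 / σ ^ 2)) := by
  have hσ2 : (0:ℝ) < σ ^ 2 := by positivity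
  obtain ⟨t, htdef⟩ : ∃ t : ℝ, t = (σ ^ 2)⁻¹ := ⟨_, rfl⟩
  have ht : 0 < t := by rw [htdef]; positivity
  have htσ : t * σ ^ 2 = 1 := by rw [htdef]; field_simp
  obtain ⟨α, hαdef⟩ : ∃ α : ℝ, α = rexp (-(3 * t) - 1) / t := ⟨_, rfl⟩
  have hα : 0 ≤ α := by rw [hαdef]; positivity
  have hcont : Continuous fun z : EuclideanSpace ℝ (Fin d) => ⟪z, u⟫ :=
    continuous_id.inner continuous_const
  have hm1 : Measurable fun z : EuclideanSpace ℝ (Fin d) =>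
      ENNReal.ofReal (rexp (t * ⟪u, z⟫)) :=
    ENNReal.measurable_ofReal.comp ((Real.continuous_exp.comp
      (continuous_const.mul (continuous_const.inner continuous_id))).measurable)
  have hm2 : Measurable fun z : EuclideanSpace ℝ (Fin d) =>
      ENNReal.ofReal (rexp (-t * ⟪u, z⟫)) :=
    ENNReal.measurable_ofReal.comp ((Real.continuous_exp.comp
      (continuous_const.mul (continuous_const.inner continuous_id))).measurable)
  calc ∫⁻ z, ENNReal.ofReal (max 0 (|⟪z, u⟫| - 3)) ∂(gaussianPi μZ σ)
      ≤ ∫⁻ z, (ENNReal.ofReal α * ENNReal.ofReal (rexp (t * ⟪u, z⟫))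
          + ENNReal.ofReal α * ENNReal.ofReal (rexp (-t * ⟪u, z⟫))) ∂(gaussianPi μZ σ) := by
        refine lintegral_mono fun z => ?_
        rw [← ENNReal.ofReal_mul hα, ← ENNReal.ofReal_mul hα, ← ENNReal.ofReal_add
          (by positivity) (by positivity)]
        refine ENNReal.ofReal_le_ofReal ?_
        have := ptwise_bound ht ⟪z, u⟫
        rw [hαdef]
        calc max 0 (|⟪z, u⟫| - 3)
            ≤ rexp (-(3*t) - 1) / t * (rexp (t * ⟪z, u⟫) + rexp (t * (-⟪z, u⟫))) := this
          _ = rexp (-(3*t) - 1) / t * rexp (t * ⟪u, z⟫)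
              + rexp (-(3*t) - 1) / t * rexp (-t * ⟪u, z⟫) := by
              rw [real_inner_comm z u]; ring_nf
    _ = ENNReal.ofReal α * ENNReal.ofReal (rexp (t * ⟪u, μZ⟫ + t ^ 2 * σ ^ 2 * ‖u‖ ^ 2 / 2))
        + ENNReal.ofReal α * ENNReal.ofReal (rexp (-t * ⟪u, μZ⟫ + (-t) ^ 2 * σ ^ 2 * ‖u‖ ^ 2 / 2)) := by
        rw [lintegral_add_left (hm1.const_mul _), lintegral_const_mul _ hm1,
          lintegral_const_mul _ hm2, gaussianPi_mgf μZ u hσ0 t]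
        have := gaussianPi_mgf μZ u hσ0 (-t)
        simp only [neg_mul] at this ⊢
        rw [this]
    _ ≤ ENNReal.ofReal (4 * rexp (-0.2 / σ ^ 2)) := by
        rw [← ENNReal.ofReal_mul hα, ← ENNReal.ofReal_mul hα, ← ENNReal.ofReal_add
          (by positivity) (by positivity)]
        refine ENNReal.ofReal_le_ofReal ?_
        have hiu : |⟪u, μZ⟫| ≤ 2 := by
          refine (abs_real_inner_le_norm u μZ).trans ?_
          calc ‖u‖ * ‖μZ‖ ≤ 1 * 2 := mul_le_mul hu hμ (norm_nonneg _) one_pos.le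
            _ = 2 := by ring
        have hquad : t ^ 2 * σ ^ 2 * ‖u‖ ^ 2 / 2 ≤ t / 2 := by
          have h1 : t ^ 2 * σ ^ 2 = t := by rw [sq]; rw [mul_assoc, htσ, mul_one]
          rw [h1]
          have : ‖u‖ ^ 2 ≤ 1 := by nlinarith [norm_nonneg u]
          nlinarith
        have hM : ∀ s : ℝ, s * ⟪u, μZ⟫ + s ^ 2 * σ ^ 2 * ‖u‖ ^ 2 / 2 ≤ 2 * t + t / 2 →
            True := fun _ _ => trivial
        have hMp : rexp (t * ⟪u, μZ⟫ + t ^ 2 * σ ^ 2 * ‖u‖ ^ 2 / 2) ≤ rexp (2 * t + t / 2) := by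
          refine Real.exp_le_exp.2 (add_le_add ?_ hquad)
          calc t * ⟪u, μZ⟫ ≤ t * |⟪u, μZ⟫| := by
                refine mul_le_mul_of_nonneg_left (le_abs_self _) ht.le
            _ ≤ t * 2 := mul_le_mul_of_nonneg_left hiu ht.le
            _ = 2 * t := by ring
        have hMm : rexp (-t * ⟪u, μZ⟫ + (-t) ^ 2 * σ ^ 2 * ‖u‖ ^ 2 / 2) ≤ rexp (2 * t + t / 2) := by
          refine Real.exp_le_exp.2 (add_le_add ?_ (by rw [neg_sq]; exact hquad))
          calc -t * ⟪u, μZ⟫ = t * (-⟪u, μZ⟫) := by ring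
            _ ≤ t * |⟪u, μZ⟫| := mul_le_mul_of_nonneg_left (neg_le_abs _) ht.le
            _ ≤ t * 2 := mul_le_mul_of_nonneg_left hiu ht.le
            _ = 2 * t := by ring
        calc α * rexp (t * ⟪u, μZ⟫ + t ^ 2 * σ ^ 2 * ‖u‖ ^ 2 / 2)
              + α * rexp (-t * ⟪u, μZ⟫ + (-t) ^ 2 * σ ^ 2 * ‖u‖ ^ 2 / 2)
            ≤ α * rexp (2 * t + t / 2) + α * rexp (2 * t + t / 2) :=
              add_le_add (mul_le_mul_of_nonneg_left hMp hα) (mul_le_mul_of_nonneg_left hMm hα)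
          _ = 2 * σ ^ 2 * (rexp (-(3 * t) - 1) * rexp (2 * t + t / 2)) := by
              rw [hαdef, htdef]; field_simp; ring
          _ = 2 * σ ^ 2 * rexp (-0.5 * t - 1) := by
              rw [← Real.exp_add]; ring_nf
          _ ≤ 4 * rexp (-0.2 / σ ^ 2) := by
              have h1 : 2 * σ ^ 2 ≤ 4 := by nlinarith
              have h2 : rexp (-0.5 * t - 1) ≤ rexp (-0.2 / σ ^ 2) := by
                refine Real.exp_le_exp.2 ?_
                rw [htdef]
                rw [div_eq_mul_inv]
                nlinarith [inv_pos.2 hσ2]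
              exact mul_le_mul h1 h2 (Real.exp_pos _).le (by norm_num)

lemma clip_meas {d : ℕ} (z : EuclideanSpace ℝ (Fin d)) :
    Measurable (clip z 3) := by
  have hc : Continuous fun u : EuclideanSpace ℝ (Fin d) => ⟪z, u⟫ :=
    continuous_const.inner continuous_id
  have hs : MeasurableSet {u : EuclideanSpace ℝ (Fin d) | ⟪z, u⟫ ≠ 0} :=
    (hc.measurable (measurableSet_singleton 0)).compl
  refine Measurable.ite hs ?_ measurable_id
  exact ((measurable_const.min (measurable_const.div hc.measurable.abs)).smul measurable_id)

lemma clip_norm_le {d : ℕ} (z u : EuclideanSpace ℝ (Fin d)) : ‖clip z 3 u‖ ≤ ‖u‖ := by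
  unfold clip
  split_ifs with h
  · rw [norm_smul, Real.norm_eq_abs]
    have h0 : (0:ℝ) ≤ min 1 (3 / |⟪z, u⟫|) := le_min one_pos.le (by positivity)
    rw [abs_of_nonneg h0]
    calc min 1 (3 / |⟪z, u⟫|) * ‖u‖ ≤ 1 * ‖u‖ :=
          mul_le_mul_of_nonneg_right (min_le_left _ _) (norm_nonneg _)
      _ = ‖u‖ := one_mul _
  · exact le_rfl

lemma clip_inner_abs {d : ℕ} (z u : EuclideanSpace ℝ (Fin d)) :
    |⟪z, clip z 3 u⟫ - ⟪z, u⟫| = max 0 (|⟪z, u⟫| - 3) := by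
  unfold clip
  split_ifs with h
  · rw [real_inner_smul_right]
    have hb : 0 < |⟪z, u⟫| := abs_pos.2 h
    rcases le_or_gt |⟪z, u⟫| 3 with hc | hc
    · rw [min_eq_left ((one_le_div hb).2 hc), one_mul, sub_self, abs_zero,
        max_eq_left (by linarith)]
    · have h1 : 3 / |⟪z, u⟫| ≤ 1 := (div_le_one hb).2 hc.le
      rw [min_eq_right h1, max_eq_right (by linarith)]
      have he : 3 / |⟪z, u⟫| * ⟪z, u⟫ - ⟪z, u⟫ = (3 / |⟪z, u⟫| - 1) * ⟪z, u⟫ := by ring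
      rw [he, abs_mul, abs_of_nonpos (by linarith), neg_sub, sub_mul, one_mul,
        div_mul_cancel₀ _ hb.ne']
  · push_neg at h
    rw [h]
    norm_num

lemma pointwise_z {d : ℕ} (P : Measure (EuclideanSpace ℝ (Fin d))) [IsProbabilityMeasure P]
    (hP : ∀ᵐ u ∂P, ‖u‖ ≤ 1) (z : EuclideanSpace ℝ (Fin d)) :
    ENNReal.ofReal |⟪z, (∫ u, clip z 3 u ∂P) - ∫ u, u ∂P⟫| ≤
      ∫⁻ u, ENNReal.ofReal (max 0 (|⟪z, u⟫| - 3)) ∂P := by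
  have hclip : Integrable (clip z 3) P := by
    refine Integrable.mono' (integrable_const 1) (clip_meas z).aestronglyMeasurable ?_
    filter_upwards [hP] with u hu
    exact (clip_norm_le z u).trans hu
  have hid : Integrable (fun u : EuclideanSpace ℝ (Fin d) => u) P := by
    refine Integrable.mono' (integrable_const 1) measurable_id.aestronglyMeasurable ?_
    filter_upwards [hP] with u hu using hu
  have hkey : ⟪z, (∫ u, clip z 3 u ∂P) - ∫ u, u ∂P⟫
      = ∫ u, (⟪z, clip z 3 u⟫ - ⟪z, u⟫) ∂P := by
    rw [inner_sub_right, ← integral_inner hclip z, ← integral_inner hid z,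
      ← integral_sub (hclip.const_inner z) (hid.const_inner z)]
  rw [hkey]
  have habs : Integrable (fun u => |⟪z, clip z 3 u⟫ - ⟪z, u⟫|) P :=
    ((hclip.const_inner z).sub (hid.const_inner z)).abs
  calc ENNReal.ofReal |∫ u, (⟪z, clip z 3 u⟫ - ⟪z, u⟫) ∂P|
      ≤ ENNReal.ofReal (∫ u, |⟪z, clip z 3 u⟫ - ⟪z, u⟫| ∂P) :=
        ENNReal.ofReal_le_ofReal (by
          simpa [Real.norm_eq_abs] using
            norm_integral_le_integral_norm (fun u => ⟪z, clip z 3 u⟫ - ⟪z, u⟫) (μ := P))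
    _ = ∫⁻ u, ENNReal.ofReal |⟪z, clip z 3 u⟫ - ⟪z, u⟫| ∂P :=
        ofReal_integral_eq_lintegral_ofReal habs
          (Filter.Eventually.of_forall fun u => abs_nonneg _)
    _ = ∫⁻ u, ENNReal.ofReal (max 0 (|⟪z, u⟫| - 3)) ∂P := by
        refine lintegral_congr fun u => ?_
        rw [clip_inner_abs]

theorem clip_concentration_expectation {d : ℕ} (P : Measure (EuclideanSpace ℝ (Fin d)))
    [IsProbabilityMeasure P] (hP : ∀ᵐ u ∂P, ‖u‖ ≤ 1)
    (μZ : EuclideanSpace ℝ (Fin d)) (σZ : ℝ)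
    (hσ0 : 0 < σZ) (hσ1 : σZ ≤ 1) (hμ : ‖μZ‖ ≤ 2) :
    ∫ z, |⟪z, (∫ u, clip z 3 u ∂P) - ∫ u, u ∂P⟫| ∂(gaussianPi μZ σZ) ≤
      4 * Real.exp (-0.2 / σZ ^ 2) := by
  have hRHS : (0:ℝ) ≤ 4 * Real.exp (-0.2 / σZ ^ 2) := by positivity
  haveI hsf : SFinite (gaussianPi μZ σZ) := by unfold gaussianPi; infer_instance
  by_cases hI : Integrable
      (fun z => |⟪z, (∫ u, clip z 3 u ∂P) - ∫ u, u ∂P⟫|) (gaussianPi μZ σZ)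
  swap
  · rw [integral_undef hI]; exact hRHS
  rw [integral_eq_lintegral_of_nonneg_ae (Filter.Eventually.of_forall fun z => abs_nonneg _)
    hI.aestronglyMeasurable]
  refine ENNReal.toReal_le_of_le_ofReal hRHS ?_
  have hGmeas : Measurable fun p : EuclideanSpace ℝ (Fin d) × EuclideanSpace ℝ (Fin d) =>
      ENNReal.ofReal (max 0 (|⟪p.1, p.2⟫| - 3)) := by
    have hc : Continuous fun p : EuclideanSpace ℝ (Fin d) × EuclideanSpace ℝ (Fin d) =>
        ⟪p.1, p.2⟫ := continuous_fst.inner continuous_snd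
    exact ENNReal.measurable_ofReal.comp
      ((continuous_const.max (hc.abs.sub continuous_const)).measurable)
  calc ∫⁻ z, ENNReal.ofReal |⟪z, (∫ u, clip z 3 u ∂P) - ∫ u, u ∂P⟫| ∂(gaussianPi μZ σZ)
      ≤ ∫⁻ z, ∫⁻ u, ENNReal.ofReal (max 0 (|⟪z, u⟫| - 3)) ∂P ∂(gaussianPi μZ σZ) :=
        lintegral_mono fun z => pointwise_z P hP z
    _ = ∫⁻ u, ∫⁻ z, ENNReal.ofReal (max 0 (|⟪z, u⟫| - 3)) ∂(gaussianPi μZ σZ) ∂P :=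
        lintegral_lintegral_swap hGmeas.aemeasurable
    _ ≤ ∫⁻ _u, ENNReal.ofReal (4 * rexp (-0.2 / σZ ^ 2)) ∂P := by
        refine lintegral_mono_ae ?_
        filter_upwards [hP] with u hu
        exact tail_bound μZ hσ0 hσ1 hμ hu
    _ = ENNReal.ofReal (4 * rexp (-0.2 / σZ ^ 2)) := by
        rw [lintegral_const, measure_univ, mul_one]
end

section
/- Let w ∈ ℝ^{nk} be partitioned into blocks w(1), …, w(n) ∈ ℝ^k, let y₁,…,y_n ∈ [k], and let I ⊆ [n] be the set of indices i with ⟨w(i), e_{y_i}⟩ > ‖w(i)‖₂/√2. If ‖w‖₂ ≤ R, then (1/n)·Σ_{i∈[n]} ⟨w(i), e_{y_i}⟩ ≤ (R/n)·sqrt(n/2 + |I|/2). -/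
open Finset

theorem blockwise_inner_bound (n k : ℕ) (w : Fin n → EuclideanSpace ℝ (Fin k))
    (y : Fin n → Fin k) (R : ℝ)
    (hw : Real.sqrt (∑ i, ‖w i‖ ^ 2) ≤ R) :
    (1 / n) * ∑ i, w i (y i) ≤
      (R / n) * Real.sqrt ((n : ℝ) / 2 +
        (univ.filter (fun i => ‖w i‖ / Real.sqrt 2 < w i (y i))).card / 2) := by
  have hR : 0 ≤ R := le_trans (Real.sqrt_nonneg _) hw
  set c : Fin n → ℝ := fun i => if ‖w i‖ / Real.sqrt 2 < w i (y i) then 1 else 1 / Real.sqrt 2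
    with hc
  have hcoord : ∀ i, w i (y i) ≤ ‖w i‖ := by
    intro i
    calc w i (y i) ≤ |w i (y i)| := le_abs_self _
    _ = Real.sqrt ((w i (y i)) ^ 2) := (Real.sqrt_sq_eq_abs _).symm
    _ ≤ Real.sqrt (∑ j, ‖w i j‖ ^ 2) := by
        apply Real.sqrt_le_sqrt
        have := Finset.single_le_sum (f := fun j => ‖w i j‖ ^ 2)
          (fun j _ => by positivity) (Finset.mem_univ (y i))
        simpa [sq_abs] using this
    _ = ‖w i‖ := (EuclideanSpace.norm_eq (w i)).symm
  have hstep : ∀ i, w i (y i) ≤ c i * ‖w i‖ := by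
    intro i
    simp only [hc]
    split_ifs with h
    · simpa using hcoord i
    · rw [div_mul_eq_mul_div, one_mul]
      rw [div_lt_iff₀ (by positivity)] at h
      push_neg at h
      rw [le_div_iff₀ (by positivity : (0:ℝ) < Real.sqrt 2)]
      linarith
  have hsum : ∑ i, w i (y i) ≤ ∑ i, c i * ‖w i‖ :=
    Finset.sum_le_sum fun i _ => hstep i
  have hcs : ∑ i, c i * ‖w i‖ ≤
      Real.sqrt (∑ i, c i ^ 2) * Real.sqrt (∑ i, ‖w i‖ ^ 2) :=
    Real.sum_mul_le_sqrt_mul_sqrt _ _ _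
  have hcsq : ∑ i, c i ^ 2 = (n : ℝ) / 2 +
      (univ.filter (fun i => ‖w i‖ / Real.sqrt 2 < w i (y i))).card / 2 := by
    have : ∀ i, c i ^ 2 = (1:ℝ)/2 +
        (if ‖w i‖ / Real.sqrt 2 < w i (y i) then (1:ℝ)/2 else 0) := by
      intro i
      simp only [hc]
      split_ifs with h
      · norm_num
      · rw [div_pow, one_pow, Real.sq_sqrt (by norm_num : (0:ℝ) ≤ 2)]; norm_num
    rw [Finset.sum_congr rfl fun i _ => this i, Finset.sum_add_distrib,
      ← Finset.sum_filter]
    simp [Finset.sum_const, Finset.card_univ, div_eq_mul_inv, mul_comm]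
  have key : ∑ i, w i (y i) ≤
      R * Real.sqrt ((n : ℝ) / 2 +
        (univ.filter (fun i => ‖w i‖ / Real.sqrt 2 < w i (y i))).card / 2) := by
    calc ∑ i, w i (y i) ≤ Real.sqrt (∑ i, c i ^ 2) * Real.sqrt (∑ i, ‖w i‖ ^ 2) :=
          hsum.trans hcs
      _ ≤ Real.sqrt ((n : ℝ) / 2 + _) * R := by
          rw [hcsq]
          exact mul_le_mul_of_nonneg_left hw (Real.sqrt_nonneg _)
      _ = R * Real.sqrt ((n : ℝ) / 2 + _) := mul_comm _ _
  rcases Nat.eq_zero_or_pos n with hn | hn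
  · subst hn; simp
  · have hn' : (0:ℝ) < n := by exact_mod_cast hn
    rw [one_div, mul_comm, div_mul_eq_mul_div, ← div_eq_mul_inv]
    gcongr
end

section
/- For any distribution over y uniform on [k] and any (possibly randomized) estimator ŷ that is (ε,δ)-DP in y (i.e., changing y changes the output distribution by at most an (e^ε, δ) factor), the probability that ŷ = y is at most e^ε/(e^ε + k − 1) + δ. -/
open Finset

theorem dp_selection_bound (k : ℕ) (hk : 1 ≤ k) (ε δ : ℝ) (hδ : 0 ≤ δ)
    (A : Fin k → Fin k → ℝ) (hA0 : ∀ y s, 0 ≤ A y s) (hA1 : ∀ y, ∑ s, A y s = 1)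
    (hDP : ∀ y y' : Fin k, ∀ S : Finset (Fin k),
      ∑ s ∈ S, A y s ≤ Real.exp ε * ∑ s ∈ S, A y' s + δ) :
    (1 / k) * ∑ y, A y y ≤ Real.exp ε / (Real.exp ε + k - 1) + δ := by
  set E := Real.exp ε with hE
  have hEpos : 0 < E := Real.exp_pos ε
  have hkR : (1:ℝ) ≤ k := by exact_mod_cast hk
  have hkpos : (0:ℝ) < k := by linarith
  have hden : 0 < E + k - 1 := by linarith
  set T := ∑ y, A y y with hT
  have hsingle : ∀ y y' : Fin k, A y y ≤ E * A y' y + δ := by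
    intro y y'
    simpa using hDP y y' {y}
  have hcard : ∀ y : Fin k, ((univ \ {y} : Finset (Fin k)).card : ℝ) = (k : ℝ) - 1 := by
    intro y
    rw [card_sdiff_of_subset (by simp)]
    simp [Nat.cast_sub hk]
  have h1 : ∀ y : Fin k,
      ((k:ℝ)-1) * A y y ≤ E * ∑ y' ∈ univ \ {y}, A y' y + ((k:ℝ)-1) * δ := by
    intro y
    calc ((k:ℝ)-1) * A y y = ∑ _y' ∈ univ \ {y}, A y y := by
          rw [Finset.sum_const, nsmul_eq_mul, hcard y]
      _ ≤ ∑ y' ∈ univ \ {y}, (E * A y' y + δ) :=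
          Finset.sum_le_sum (fun y' _ => hsingle y y')
      _ = E * ∑ y' ∈ univ \ {y}, A y' y + ((k:ℝ)-1) * δ := by
          rw [Finset.sum_add_distrib, Finset.mul_sum, Finset.sum_const, nsmul_eq_mul, hcard y]
  have h2 : ∑ y, ∑ y' ∈ univ \ {y}, A y' y = (k:ℝ) - T := by
    have : ∀ y : Fin k, ∑ y' ∈ univ \ {y}, A y' y = (∑ y', A y' y) - A y y := by
      intro y
      rw [Finset.sum_sdiff_eq_sub (by simp)]
      simp
    rw [Finset.sum_congr rfl (fun y _ => this y), Finset.sum_sub_distrib]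
    have hswap : ∑ y : Fin k, ∑ y' : Fin k, A y' y = (k:ℝ) := by
      rw [Finset.sum_comm]
      simp [hA1]
    rw [hswap, hT]
  have key : ((k:ℝ) - 1) * T ≤ E * ((k:ℝ) - T) + (k:ℝ) * ((k:ℝ)-1) * δ := by
    have := Finset.sum_le_sum (fun y (_ : y ∈ (univ : Finset (Fin k))) => h1 y)
    rw [Finset.sum_add_distrib, ← Finset.mul_sum, ← Finset.mul_sum, h2,
      Finset.sum_const] at this
    simp only [card_univ, Fintype.card_fin, nsmul_eq_mul] at this
    linarith [this]
  have hD : E / (E + (k:ℝ) - 1) * (E + (k:ℝ) - 1) = E := div_mul_cancel₀ _ hden.ne'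
  have h3 : T ≤ (k:ℝ) * (E / (E + (k:ℝ) - 1) + δ) := by
    have hmul : T * (E + (k:ℝ) - 1) ≤ ((k:ℝ) * (E / (E + (k:ℝ) - 1) + δ)) * (E + (k:ℝ) - 1) := by
      nlinarith [mul_nonneg (mul_nonneg hkpos.le hδ) hEpos.le]
    exact le_of_mul_le_mul_right hmul hden
  calc (1 / (k:ℝ)) * T ≤ (1 / (k:ℝ)) * ((k:ℝ) * (E / (E + (k:ℝ) - 1) + δ)) := by
        apply mul_le_mul_of_nonneg_left h3
        positivity
    _ = E / (E + (k:ℝ) - 1) + δ := by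
        field_simp
end
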